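/- arXiv:2011.02974 — 2 statements merged into one kernel-verified Lean document; each statement's English description precedes it below -/
import Mathlib

section
/- Define n_d(a) = dim R_{(3d1-a1-2, a2-3d2)} + dim R_{(a1-3d1, 3d2-a2-2)} - 3*(dim R_{(2d1-a1-2, a2-2d2)} + dim R_{(a1-2d1, 2d2-a2-2)}). Then for a = (a1,a2) with a1 >= 3*d1 and 2*d2 - 1 <= a2 <= 3*d2 - 1, one has n_d(a) = chi(a)_-, where chi(a)_- = max(0, -chi(a)) and chi(a) = dim R_a - 3 dim R_{a-d} + 3 dim R_{a-2d} - dim R_{a-3d}. -/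
def D (b1 b2 : ℤ) : ℤ := if 0 ≤ b1 ∧ 0 ≤ b2 then (b1 + 1) * (b2 + 1) else 0

def chi (d1 d2 a1 a2 : ℤ) : ℤ :=
  D a1 a2 - 3 * D (a1 - d1) (a2 - d2) + 3 * D (a1 - 2 * d1) (a2 - 2 * d2)
    - D (a1 - 3 * d1) (a2 - 3 * d2)

def nd (d1 d2 a1 a2 : ℤ) : ℤ :=
  D (3 * d1 - a1 - 2) (a2 - 3 * d2) + D (a1 - 3 * d1) (3 * d2 - a2 - 2)
    - 3 * (D (2 * d1 - a1 - 2) (a2 - 2 * d2) + D (a1 - 2 * d1) (2 * d2 - a2 - 2))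

theorem stmt_6 (d1 d2 a1 a2 : ℤ) (hd1 : 0 < d1) (hd2 : 0 < d2)
    (ha1 : 0 ≤ a1) (ha2 : 0 ≤ a2)
    (h1 : 3 * d1 ≤ a1) (h2 : 2 * d2 - 1 ≤ a2) (h3 : a2 ≤ 3 * d2 - 1) :
    nd d1 d2 a1 a2 = max 0 (-(chi d1 d2 a1 a2)) := by
  have key : -(chi d1 d2 a1 a2) = (a1 - 3 * d1 + 1) * (3 * d2 - a2 - 1) := by
    unfold chi D
    split_ifs <;>
      first
        | ring1
        | (exfalso; omega)
        | ((have h : a2 = 2 * d2 - 1 := by omega); subst h; ring1)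
        | ((have h : a2 = 3 * d2 - 1 := by omega); subst h; ring1)
  have hnn : 0 ≤ (a1 - 3 * d1 + 1) * (3 * d2 - a2 - 1) :=
    mul_nonneg (by omega) (by omega)
  rw [key, max_eq_right hnn]
  unfold nd D
  split_ifs <;>
    first
      | ring1
      | (exfalso; omega)
      | ((have h : a2 = 2 * d2 - 1 := by omega); subst h; ring1)
      | ((have h : a2 = 3 * d2 - 1 := by omega); subst h; ring1)
end

section
/- Let theta be the 2x3 matrix over K[u,v] with rows (p0,p1,p2) and (q0,q1,q2), where all entries are homogeneous of degree n. If the three 2x2 minors of theta have no common zero in P^1 (equivalently, the ideal generated by the minors contains a power of (u,v)), then the kernel of the map K[u,v](-n)^3 -> K[u,v]^2 given by theta is a free module of rank 1 generated by the vector of signed 2x2 minors (q1*p2 - p1*q2, p0*q2 - q0*p2, q0*p1 - p0*q1). -/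
/-!
Write `m = q ×₃ p` for the vector of signed minors. If `θ x = 0`, i.e. `x` is orthogonal to both
rows, the triple product expansion gives `m ×₃ x = 0`, and hence `(a ⬝ᵥ m) • x = (a ⬝ᵥ x) • m` for
every `a`. Choosing `a` with `a ⬝ᵥ m = u ^ k` and `b` with `b ⬝ᵥ m = v ^ k` shows
`v ^ k (a ⬝ᵥ x) = u ^ k (b ⬝ᵥ x)`; as `u ^ k` and `v ^ k` are relatively prime, `u ^ k ∣ a ⬝ᵥ x`,
and cancelling `u ^ k` writes `x` as a multiple of `m`.
-/

open MvPolynomial Matrix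

section CrossProduct

variable {R : Type*} [CommRing R]

lemma cross_cross_eq_zero_of_dotProduct_eq_zero {p q x : Fin 3 → R}
    (hp : p ⬝ᵥ x = 0) (hq : q ⬝ᵥ x = 0) : q ⨯₃ p ⨯₃ x = 0 := by
  rw [cross_cross_eq_smul_sub_smul, hp, hq, zero_smul, zero_smul, sub_zero]

lemma dotProduct_smul_eq_dotProduct_smul_of_cross_eq_zero {m x : Fin 3 → R}
    (h : m ⨯₃ x = 0) (a : Fin 3 → R) : (a ⬝ᵥ m) • x = (a ⬝ᵥ x) • m := by
  have hxm : x ⨯₃ m = 0 := by rw [← cross_anticomm, h, neg_zero]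
  have := cross_cross_eq_smul_sub_smul' a x m
  rwa [hxm, map_zero, eq_comm, sub_eq_zero, dotProduct_comm x] at this

lemma ne_zero_of_mem_span_range {ι : Type*} {m : ι → R} {r : R}
    (hr : r ∈ Ideal.span (Set.range m)) (hr0 : r ≠ 0) : m ≠ 0 := by
  rintro rfl
  have : Ideal.span (Set.range (0 : ι → R)) = ⊥ :=
    Ideal.span_eq_bot.mpr (by rintro _ ⟨i, rfl⟩; rfl)
  rw [this, Ideal.mem_bot] at hr
  exact hr0 hr

variable [IsDomain R] [DecompositionMonoid R]

theorem mem_span_singleton_of_cross_eq_zero {m x : Fin 3 → R} {r s : R}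
    (hr : r ∈ Ideal.span (Set.range m)) (hs : s ∈ Ideal.span (Set.range m))
    (hr0 : r ≠ 0) (hrs : IsRelPrime r s) (h : m ⨯₃ x = 0) : x ∈ R ∙ m := by
  have hm := ne_zero_of_mem_span_range hr hr0
  obtain ⟨a, (rfl : a ⬝ᵥ m = r)⟩ := Ideal.mem_span_range_iff_exists_fun.mp hr
  obtain ⟨b, (rfl : b ⬝ᵥ m = s)⟩ := Ideal.mem_span_range_iff_exists_fun.mp hs
  have hax := dotProduct_smul_eq_dotProduct_smul_of_cross_eq_zero h a
  have hbx := dotProduct_smul_eq_dotProduct_smul_of_cross_eq_zero h b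
  have key : (b ⬝ᵥ m) * (a ⬝ᵥ x) = (a ⬝ᵥ m) * (b ⬝ᵥ x) := by
    apply smul_left_injective R hm
    simp only [mul_smul, ← hax, ← hbx, smul_comm (b ⬝ᵥ m)]
  obtain ⟨c, hc⟩ := hrs.dvd_of_dvd_mul_left (Dvd.intro _ key.symm)
  refine Submodule.mem_span_singleton.mpr ⟨c, smul_right_injective _ hr0 ?_⟩
  simp only [hax, hc, mul_smul]

theorem ker_mulVecLin_eq_span_cross {p q : Fin 3 → R} {r s : R}
    (hr : r ∈ Ideal.span (Set.range (q ⨯₃ p))) (hs : s ∈ Ideal.span (Set.range (q ⨯₃ p)))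
    (hr0 : r ≠ 0) (hrs : IsRelPrime r s) :
    LinearMap.ker (mulVecLin (of ![p, q])) = R ∙ q ⨯₃ p := by
  apply le_antisymm
  · intro x hx
    obtain ⟨hp, hq⟩ : p ⬝ᵥ x = 0 ∧ q ⬝ᵥ x = 0 := by
      simpa [funext_iff, Fin.forall_fin_two] using hx
    exact mem_span_singleton_of_cross_eq_zero hr hs hr0 hrs
      (cross_cross_eq_zero_of_dotProduct_eq_zero hp hq)
  · rw [Submodule.span_le, Set.singleton_subset_iff, SetLike.mem_coe, LinearMap.mem_ker]
    simp [funext_iff, Fin.forall_fin_two, dot_cross_self, dot_self_cross]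

end CrossProduct

lemma isRelPrime_X_pow_X_pow {σ K : Type*} [Field K] {i j : σ} (hij : i ≠ j) (k l : ℕ) :
    IsRelPrime (X i ^ k : MvPolynomial σ K) (X j ^ l) :=
  (X_prime.irreducible.isRelPrime_iff_not_dvd.mpr (mt X_dvd_X.mp hij)).pow

theorem stmt_11_general (K : Type*) [Field K]
    (p q : Fin 3 → MvPolynomial (Fin 2) K)
    (hbpf : ∃ k : ℕ,
      (Ideal.span {X 0, X 1} : Ideal (MvPolynomial (Fin 2) K)) ^ k ≤
        Ideal.span {q 1 * p 2 - p 1 * q 2, p 0 * q 2 - q 0 * p 2,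
          q 0 * p 1 - p 0 * q 1}) :
    LinearMap.ker
        (Matrix.mulVecLin (Matrix.of ![![p 0, p 1, p 2], ![q 0, q 1, q 2]])) =
      Submodule.span (MvPolynomial (Fin 2) K)
        {![q 1 * p 2 - p 1 * q 2, p 0 * q 2 - q 0 * p 2, q 0 * p 1 - p 0 * q 1]} ∧
      ![q 1 * p 2 - p 1 * q 2, p 0 * q 2 - q 0 * p 2, q 0 * p 1 - p 0 * q 1] ≠ 0 := by
  obtain ⟨k, hk⟩ := hbpf
  have hminors : ![q 1 * p 2 - p 1 * q 2, p 0 * q 2 - q 0 * p 2, q 0 * p 1 - p 0 * q 1] =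
      q ⨯₃ p := by
    rw [cross_apply, mul_comm (p 1), mul_comm (p 0) (q 2), mul_comm (p 0) (q 1)]
  have hrows : of ![![p 0, p 1, p 2], ![q 0, q 1, q 2]] = of ![p, q] := by
    ext i j; fin_cases i <;> fin_cases j <;> rfl
  have hX : ∀ i, (X i ^ k : MvPolynomial (Fin 2) K) ∈ Ideal.span (Set.range (q ⨯₃ p)) := by
    intro i
    rw [← hminors]
    simp only [range_cons, range_empty, Set.union_empty, Set.singleton_union]
    exact hk (Ideal.pow_mem_pow (Ideal.subset_span (by fin_cases i <;> simp)) k)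
  have hXk0 : (X 0 ^ k : MvPolynomial (Fin 2) K) ≠ 0 := pow_ne_zero _ (X_ne_zero 0)
  rw [hrows, hminors]
  exact ⟨ker_mulVecLin_eq_span_cross (hX 0) (hX 1) hXk0 (isRelPrime_X_pow_X_pow (by decide) k k),
    ne_zero_of_mem_span_range (hX 0) hXk0⟩

/-- If the `2×2` minors of `θ = [[p0,p1,p2],[q0,q1,q2]]` (entries homogeneous of
degree `n` in `K[u,v]`) generate an ideal containing a power of `(u,v)`, then the
kernel of `θ : R³ → R²` is free of rank one, generated by the vector of signed
`2×2` minors. -/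
theorem stmt_11 (K : Type*) [Field K] (n : ℕ)
    (p q : Fin 3 → MvPolynomial (Fin 2) K)
    (hp : ∀ i, (p i).IsHomogeneous n) (hq : ∀ i, (q i).IsHomogeneous n)
    (hbpf : ∃ k : ℕ,
      (Ideal.span {X 0, X 1} : Ideal (MvPolynomial (Fin 2) K)) ^ k ≤
        Ideal.span {q 1 * p 2 - p 1 * q 2, p 0 * q 2 - q 0 * p 2,
          q 0 * p 1 - p 0 * q 1}) :
    LinearMap.ker
        (Matrix.mulVecLin (Matrix.of ![![p 0, p 1, p 2], ![q 0, q 1, q 2]])) =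
      Submodule.span (MvPolynomial (Fin 2) K)
        {![q 1 * p 2 - p 1 * q 2, p 0 * q 2 - q 0 * p 2, q 0 * p 1 - p 0 * q 1]} ∧
      ![q 1 * p 2 - p 1 * q 2, p 0 * q 2 - q 0 * p 2, q 0 * p 1 - p 0 * q 1] ≠ 0 :=
  stmt_11_general K p q hbpf
end
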